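/- Let F : {z ∈ ℂ : -1 ≤ Im z ≤ 0} → ℂ be continuous, bounded, holomorphic in the open strip, and suppose F(t) = 0 for all real t > 0. Then F ≡ 0 on the closed strip. -/

import Mathlib

open Complex Set Metric intervalIntegral
open scoped Interval

private lemma rect_subset_ball {c w : ℂ} {r : ℝ} (hw : w ∈ ball c r) :
    [[c.re, w.re]] ×ℂ [[c.im, w.im]] ⊆ ball c r := by
  intro z hz
  rw [mem_reProdIm] at hz
  obtain ⟨h1, h2⟩ := hz
  rw [mem_ball, Complex.dist_eq_re_im] at *
  refine lt_of_le_of_lt ?_ hw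
  apply Real.sqrt_le_sqrt
  rw [Set.mem_uIcc] at h1 h2
  have e1 : (z.re - c.re) ^ 2 ≤ (w.re - c.re) ^ 2 := by
    rcases h1 with ⟨a, b⟩ | ⟨a, b⟩ <;> nlinarith
  have e2 : (z.im - c.im) ^ 2 ≤ (w.im - c.im) ^ 2 := by
    rcases h2 with ⟨a, b⟩ | ⟨a, b⟩ <;> nlinarith
  linarith

private lemma seg_h_subset {c w : ℂ} (x : ℝ) (hx : x ∈ Set.uIcc c.re w.re) :
    (x : ℂ) + c.im * I ∈ [[c.re, w.re]] ×ℂ [[c.im, w.im]] := by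
  rw [mem_reProdIm]
  constructor <;> simp [hx, Set.left_mem_uIcc]

private lemma seg_v_subset {c w : ℂ} (y : ℝ) (hy : y ∈ Set.uIcc c.im w.im) :
    (w.re : ℂ) + y * I ∈ [[c.re, w.re]] ×ℂ [[c.im, w.im]] := by
  rw [mem_reProdIm]
  constructor <;> simp [hy, Set.right_mem_uIcc]

private lemma intH {f : ℂ → ℂ} {c : ℂ} {r : ℝ} (hc : ContinuousOn f (ball c r))
    {w : ℂ} (hw : w ∈ ball c r) (b : ℝ) (hb : b ∈ Set.uIcc c.im w.im) :
    IntervalIntegrable (fun x : ℝ => f (x + b * I)) MeasureTheory.volume c.re w.re := by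
  apply ContinuousOn.intervalIntegrable
  apply hc.comp (by fun_prop : Continuous fun x : ℝ => (x : ℂ) + b * I).continuousOn
  intro x hx
  exact rect_subset_ball hw (by rw [mem_reProdIm]; exact ⟨by simpa using hx, by simpa using hb⟩)

private lemma intV {f : ℂ → ℂ} {c : ℂ} {r : ℝ} (hc : ContinuousOn f (ball c r))
    {w : ℂ} (hw : w ∈ ball c r) (a : ℝ) (ha : a ∈ Set.uIcc c.re w.re) :
    IntervalIntegrable (fun y : ℝ => f (a + y * I)) MeasureTheory.volume c.im w.im := by
  apply ContinuousOn.intervalIntegrable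
  apply hc.comp (by fun_prop : Continuous fun y : ℝ => (a : ℂ) + y * I).continuousOn
  intro y hy
  exact rect_subset_ball hw (by rw [mem_reProdIm]; exact ⟨by simpa using ha, by simpa using hy⟩)

private lemma key_rect {f : ℂ → ℂ} {c : ℂ} {r : ℝ}
    (hc : ContinuousOn f (ball c r))
    (hd : ∀ z ∈ ball c r, z.im ≠ c.im → DifferentiableAt ℂ f z)
    {w : ℂ} (hw : w ∈ ball c r) :
    (∫ x : ℝ in c.re..w.re, f (x + c.im * I)) + I • (∫ y : ℝ in c.im..w.im, f (w.re + y * I))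
      = I • (∫ y : ℝ in c.im..w.im, f (c.re + y * I))
        + (∫ x : ℝ in c.re..w.re, f (x + w.im * I)) := by
  have h0 := Complex.integral_boundary_rect_eq_zero_of_continuousOn_of_differentiableOn f c w
    (hc.mono (rect_subset_ball hw)) ?_
  · simp only [smul_eq_mul] at h0 ⊢
    linear_combination h0
  · intro z hz
    rw [mem_reProdIm] at hz
    have hz1 := hz.1
    have hz2 := hz.2
    have hzball : z ∈ ball c r := by
      apply rect_subset_ball hw
      rw [mem_reProdIm]
      constructor
      · exact Set.Ioo_subset_Icc_self hz1
      · exact Set.Ioo_subset_Icc_self hz2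
    have him : z.im ≠ c.im := by
      rcases le_total c.im w.im with h | h
      · have e : c.im ⊓ w.im = c.im := inf_eq_left.2 h
        exact ne_of_gt (e ▸ hz2.1)
      · have e : c.im ⊔ w.im = c.im := sup_eq_left.2 h
        exact ne_of_lt (e ▸ hz2.2)
    exact (hd z hzball him).differentiableWithinAt

private noncomputable def primG (f : ℂ → ℂ) (c : ℂ) (w : ℂ) : ℂ :=
  (∫ x : ℝ in c.re..w.re, f (x + c.im * I)) + I • (∫ y : ℝ in c.im..w.im, f (w.re + y * I))

private lemma morera_ball {f : ℂ → ℂ} {c : ℂ} {r : ℝ}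
    (hc : ContinuousOn f (ball c r))
    (hd : ∀ z ∈ ball c r, z.im ≠ c.im → DifferentiableAt ℂ f z) :
    DifferentiableOn ℂ f (ball c r) := by
  have hgd : ∀ z ∈ ball c r, HasDerivAt (primG f c) (f z) z := by
    intro z hz
    obtain ⟨ρ, hρ0, hρ⟩ := Metric.isOpen_iff.1 isOpen_ball z hz
    have hfz : ContinuousAt f z := hc.continuousAt (isOpen_ball.mem_nhds hz)
    rw [hasDerivAt_iff_isLittleO, Asymptotics.isLittleO_iff]
    intro ε hε
    obtain ⟨δ, hδ0, hδ⟩ := Metric.continuousAt_iff.1 hfz (ε / 2) (by positivity)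
    filter_upwards [ball_mem_nhds z (show (0:ℝ) < min δ ρ by positivity)] with u hu
    have huρ : u ∈ ball z ρ := mem_ball.2 (lt_of_lt_of_le (mem_ball.1 hu) (min_le_right _ _))
    have huδ : dist u z < δ := lt_of_lt_of_le (mem_ball.1 hu) (min_le_left _ _)
    have hucr : u ∈ ball c r := hρ huρ
    set m : ℂ := (u.re : ℂ) + (z.im : ℂ) * I with hm_def
    have hmre : m.re = u.re := by simp [hm_def]
    have hmim : m.im = z.im := by simp [hm_def]
    have hmz : m ∈ ball z ρ := rect_subset_ball huρ (by
      rw [mem_reProdIm, hmre, hmim]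
      exact ⟨Set.right_mem_uIcc, Set.left_mem_uIcc⟩)
    have hmcr : m ∈ ball c r := hρ hmz
    -- integrability
    have i1 : IntervalIntegrable (fun y : ℝ => f (u.re + y * I))
        MeasureTheory.volume c.im z.im := by
      have := intV hc hmcr u.re (by rw [hmre]; exact Set.right_mem_uIcc)
      rwa [hmim] at this
    have i2 : IntervalIntegrable (fun y : ℝ => f (u.re + y * I))
        MeasureTheory.volume z.im u.im :=
      intV (hc.mono hρ) huρ u.re Set.right_mem_uIcc
    have i3 : IntervalIntegrable (fun x : ℝ => f (x + z.im * I))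
        MeasureTheory.volume c.re z.re :=
      intH hc hz z.im Set.right_mem_uIcc
    have i4 : IntervalIntegrable (fun x : ℝ => f (x + z.im * I))
        MeasureTheory.volume z.re u.re :=
      intH (hc.mono hρ) huρ z.im Set.left_mem_uIcc
    have hsplit1 := intervalIntegral.integral_add_adjacent_intervals i1 i2
    have hsplit2 := intervalIntegral.integral_add_adjacent_intervals i3 i4
    -- increment formula
    have km := key_rect hc hd hmcr
    have kz := key_rect hc hd hz
    rw [hmre, hmim] at km
    have incr : primG f c u - primG f c z
        = (∫ x : ℝ in z.re..u.re, f (x + z.im * I))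
          + I • (∫ y : ℝ in z.im..u.im, f (u.re + y * I)) := by
      have e1 : primG f c u - primG f c m
          = I • ∫ y : ℝ in z.im..u.im, f (u.re + y * I) := by
        simp only [primG, hmre, hmim, smul_eq_mul]
        linear_combination (-I) * hsplit1
      have e2 : primG f c m - primG f c z
          = ∫ x : ℝ in z.re..u.re, f (x + z.im * I) := by
        simp only [primG, hmre, hmim, smul_eq_mul] at km kz ⊢
        linear_combination km - kz - hsplit2
      linear_combination e1 + e2
    -- constant integrability
    have ic1 : IntervalIntegrable (fun _ : ℝ => f z) MeasureTheory.volume z.re u.re :=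
      intervalIntegrable_const
    have ic2 : IntervalIntegrable (fun _ : ℝ => f z) MeasureTheory.volume z.im u.im :=
      intervalIntegrable_const
    have splitsub : primG f c u - primG f c z - (u - z) • f z
        = (∫ x : ℝ in z.re..u.re, (f (x + z.im * I) - f z))
          + I • (∫ y : ℝ in z.im..u.im, (f (u.re + y * I) - f z)) := by
      rw [intervalIntegral.integral_sub i4 ic1, intervalIntegral.integral_sub i2 ic2,
        intervalIntegral.integral_const, intervalIntegral.integral_const, incr]
      have huz : (u - z) = ((u.re - z.re : ℝ) : ℂ) + ((u.im - z.im : ℝ) : ℂ) * I := by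
        simp [Complex.ext_iff]
      rw [huz]
      simp only [smul_eq_mul, Complex.real_smul]
      push_cast
      ring
    -- estimates
    have hb1 : ‖∫ x : ℝ in z.re..u.re, (f (x + z.im * I) - f z)‖ ≤ ε / 2 * |u.re - z.re| := by
      apply intervalIntegral.norm_integral_le_of_norm_le_const
      intro x hx
      have hxball : (↑x + ↑z.im * I : ℂ) ∈ ball z δ := by
        have hre' : (↑x + ↑z.im * I : ℂ).re = x := by simp
        have him' : (↑x + ↑z.im * I : ℂ).im = z.im := by simp
        apply rect_subset_ball (mem_ball.2 huδ)
        rw [mem_reProdIm, hre', him']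
        exact ⟨Set.Ioc_subset_Icc_self hx, Set.left_mem_uIcc⟩
      have := hδ (mem_ball.1 hxball)
      rw [dist_eq_norm] at this
      exact this.le
    have hb2 : ‖∫ y : ℝ in z.im..u.im, (f (u.re + y * I) - f z)‖ ≤ ε / 2 * |u.im - z.im| := by
      apply intervalIntegral.norm_integral_le_of_norm_le_const
      intro y hy
      have hyball : (↑u.re + ↑y * I : ℂ) ∈ ball z δ := by
        have hre' : (↑u.re + ↑y * I : ℂ).re = u.re := by simp
        have him' : (↑u.re + ↑y * I : ℂ).im = y := by simp
        apply rect_subset_ball (mem_ball.2 huδ)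
        rw [mem_reProdIm, hre', him']
        exact ⟨Set.right_mem_uIcc, Set.Ioc_subset_Icc_self hy⟩
      have := hδ (mem_ball.1 hyball)
      rw [dist_eq_norm] at this
      exact this.le
    have hre : |u.re - z.re| ≤ ‖u - z‖ := by
      simpa [Complex.sub_re] using Complex.abs_re_le_norm (u - z)
    have him : |u.im - z.im| ≤ ‖u - z‖ := by
      simpa [Complex.sub_im] using Complex.abs_im_le_norm (u - z)
    calc ‖primG f c u - primG f c z - (u - z) • f z‖
        = ‖(∫ x : ℝ in z.re..u.re, (f (x + z.im * I) - f z))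
            + I • (∫ y : ℝ in z.im..u.im, (f (u.re + y * I) - f z))‖ := by rw [splitsub]
      _ ≤ ‖∫ x : ℝ in z.re..u.re, (f (x + z.im * I) - f z)‖
            + ‖I • (∫ y : ℝ in z.im..u.im, (f (u.re + y * I) - f z))‖ := norm_add_le _ _
      _ = ‖∫ x : ℝ in z.re..u.re, (f (x + z.im * I) - f z)‖
            + ‖∫ y : ℝ in z.im..u.im, (f (u.re + y * I) - f z)‖ := by
            simp [smul_eq_mul]
      _ ≤ ε / 2 * |u.re - z.re| + ε / 2 * |u.im - z.im| := add_le_add hb1 hb2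
      _ ≤ ε / 2 * ‖u - z‖ + ε / 2 * ‖u - z‖ := by
            have h2 : (0:ℝ) ≤ ε / 2 := by positivity
            exact add_le_add (mul_le_mul_of_nonneg_left hre h2)
              (mul_le_mul_of_nonneg_left him h2)
      _ = ε * ‖u - z‖ := by ring
  -- conclude
  have hgdiff : DifferentiableOn ℂ (primG f c) (ball c r) :=
    fun w hw => ((hgd w hw).differentiableAt).differentiableWithinAt
  have hga : AnalyticOnNhd ℂ (primG f c) (ball c r) := hgdiff.analyticOnNhd isOpen_ball
  have hgda : AnalyticOnNhd ℂ (deriv (primG f c)) (ball c r) := hga.deriv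
  intro w hw
  have hda : DifferentiableAt ℂ (deriv (primG f c)) w := (hgda w hw).differentiableAt
  have heq : f =ᶠ[nhds w] deriv (primG f c) := by
    filter_upwards [isOpen_ball.mem_nhds hw] with v hv
    exact ((hgd v hv).deriv).symm
  exact (hda.congr_of_eventuallyEq heq).differentiableWithinAt

private lemma diff_conj_conj {F : ℂ → ℂ} {z : ℂ}
    (h : DifferentiableAt ℂ F ((starRingEnd ℂ) z)) :
    DifferentiableAt ℂ (fun w => (starRingEnd ℂ) (F ((starRingEnd ℂ) w))) z := by
  obtain ⟨d, hd⟩ : ∃ d, HasDerivAt F d ((starRingEnd ℂ) z) := ⟨_, h.hasDerivAt⟩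
  have hFt : Filter.Tendsto (slope F ((starRingEnd ℂ) z)) (nhdsWithin ((starRingEnd ℂ) z) {x | x ≠ (starRingEnd ℂ) z}) (nhds d) :=
    hasDerivAt_iff_tendsto_slope.1 hd
  have h1 : Filter.Tendsto (fun w : ℂ => (starRingEnd ℂ) w) (nhdsWithin z {x | x ≠ z})
      (nhdsWithin ((starRingEnd ℂ) z) {x | x ≠ (starRingEnd ℂ) z}) := by
    rw [tendsto_nhdsWithin_iff]
    constructor
    · exact (Complex.continuous_conj.tendsto z).mono_left nhdsWithin_le_nhds
    · filter_upwards [self_mem_nhdsWithin] with w hw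
      intro hcontra
      exact hw (by simpa using congrArg (starRingEnd ℂ) hcontra)
  have h2 : Filter.Tendsto (fun w : ℂ => (starRingEnd ℂ) (slope F ((starRingEnd ℂ) z) ((starRingEnd ℂ) w)))
      (nhdsWithin z {x | x ≠ z}) (nhds ((starRingEnd ℂ) d)) :=
    (Complex.continuous_conj.tendsto d).comp (hFt.comp h1)
  have : HasDerivAt (fun w => (starRingEnd ℂ) (F ((starRingEnd ℂ) w))) ((starRingEnd ℂ) d) z := by
    rw [hasDerivAt_iff_tendsto_slope]
    refine Filter.Tendsto.congr (fun w => ?_) h2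
    simp only [slope_def_field, map_div₀, map_sub, Complex.conj_conj]
  exact this.differentiableAt

private lemma im_dist_le (v w : ℂ) : |v.im - w.im| ≤ dist v w := by
  rw [Complex.dist_eq]
  simpa [Complex.sub_im] using Complex.abs_im_le_norm (v - w)

private lemma re_dist_le (v w : ℂ) : |v.re - w.re| ≤ dist v w := by
  rw [Complex.dist_eq]
  simpa [Complex.sub_re] using Complex.abs_re_le_norm (v - w)

/-- A function continuous and bounded on the closed strip
`-1 ≤ Im z ≤ 0`, holomorphic in its interior, which vanishes on the positive
real half-line, vanishes identically on the closed strip. -/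
theorem strip_vanishing
    (F : ℂ → ℂ)
    (hc : ContinuousOn F {z : ℂ | -1 ≤ z.im ∧ z.im ≤ 0})
    (hb : ∃ C, ∀ z ∈ {z : ℂ | -1 ≤ z.im ∧ z.im ≤ 0}, ‖F z‖ ≤ C)
    (hd : DifferentiableOn ℂ F {z : ℂ | -1 < z.im ∧ z.im < 0})
    (hv : ∀ t : ℝ, 0 < t → F t = 0) :
    ∀ z ∈ {z : ℂ | -1 ≤ z.im ∧ z.im ≤ 0}, F z = 0 := by
  classical
  have hSlow_open : IsOpen {z : ℂ | -1 < z.im ∧ z.im < 0} := by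
    have h : {z : ℂ | -1 < z.im ∧ z.im < 0} = Complex.im ⁻¹' Set.Ioo (-1) 0 := by
      ext v; simp [Set.mem_Ioo]
    rw [h]; exact isOpen_Ioo.preimage Complex.continuous_im
  set H : ℂ → ℂ := fun z => if z.im ≤ 0 then F z else (starRingEnd ℂ) (F ((starRingEnd ℂ) z))
    with hH
  set U : Set ℂ := {z : ℂ | (-1 < z.im ∧ z.im < 1) ∧ (z.im ≠ 0 ∨ 0 < z.re)} with hUdef
  have hU_open : IsOpen U := by
    have h : U = (Complex.im ⁻¹' Set.Ioo (-1) 1)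
        ∩ ((Complex.im ⁻¹' {(0:ℝ)})ᶜ ∪ Complex.re ⁻¹' Set.Ioi 0) := by
      ext v
      simp only [hUdef, Set.mem_setOf_eq, Set.mem_inter_iff, Set.mem_preimage, Set.mem_Ioo,
        Set.mem_union, Set.mem_compl_iff, Set.mem_singleton_iff, Set.mem_Ioi]
    rw [h]
    exact ((isOpen_Ioo.preimage Complex.continuous_im)).inter
      (((isClosed_singleton.preimage Complex.continuous_im).isOpen_compl).union
        (isOpen_Ioi.preimage Complex.continuous_re))
  have hFdiff : ∀ w : ℂ, -1 < w.im → w.im < 0 → DifferentiableAt ℂ F w := fun w h1 h2 =>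
    hd.differentiableAt (hSlow_open.mem_nhds ⟨h1, h2⟩)
  have hHF : ∀ w : ℂ, w.im < 0 → H =ᶠ[nhds w] F := by
    intro w hw
    filter_upwards [(isOpen_lt Complex.continuous_im continuous_const).mem_nhds
      (show w.im < 0 from hw)] with v hv
    simp only [hH, if_pos (le_of_lt hv)]
  have hHG : ∀ w : ℂ, 0 < w.im →
      H =ᶠ[nhds w] fun v => (starRingEnd ℂ) (F ((starRingEnd ℂ) v)) := by
    intro w hw
    filter_upwards [(isOpen_lt continuous_const Complex.continuous_im).mem_nhds
      (show (0:ℝ) < w.im from hw)] with v hv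
    simp only [hH, if_neg (not_le.2 hv)]
  have hHd' : ∀ w ∈ U, w.im ≠ 0 → DifferentiableAt ℂ H w := by
    intro w hwU hwim
    rcases hwim.lt_or_gt with hneg | hpos
    · exact (hFdiff w hwU.1.1 hneg).congr_of_eventuallyEq (hHF w hneg)
    · have hcj : DifferentiableAt ℂ F ((starRingEnd ℂ) w) := by
        apply hFdiff
        · simp only [Complex.conj_im]; linarith [hwU.1.2]
        · simp only [Complex.conj_im]; linarith
      exact (diff_conj_conj hcj).congr_of_eventuallyEq (hHG w hpos)
  have hHc : ∀ w ∈ U, ContinuousAt H w := by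
    intro w hwU
    rcases lt_trichotomy w.im 0 with hneg | hzero | hpos
    · have hFc : ContinuousAt F w := by
        apply hc.continuousAt
        exact Filter.mem_of_superset (hSlow_open.mem_nhds ⟨hwU.1.1, hneg⟩)
          (fun v hv => ⟨hv.1.le, hv.2.le⟩)
      exact hFc.congr (hHF w hneg).symm
    · -- seam
      have hwre : 0 < w.re := hwU.2.resolve_left (fun h => h hzero)
      have hwS : w ∈ {z : ℂ | -1 ≤ z.im ∧ z.im ≤ 0} := ⟨by rw [hzero]; norm_num, hzero.le⟩
      have hFw0 : F w = 0 := by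
        have hw' : w = ((w.re : ℝ) : ℂ) := Complex.ext (by simp) (by simp [hzero])
        rw [hw']; exact hv w.re hwre
      have hHw0 : H w = F w := by simp only [hH, if_pos hzero.le]
      rw [Metric.continuousAt_iff]
      intro ε hε
      obtain ⟨δ, hδ0, hδ⟩ := Metric.continuousWithinAt_iff.1 (hc w hwS) ε hε
      refine ⟨min δ 1, by positivity, ?_⟩
      intro v hvdist
      have hd1 : dist v w < δ := lt_of_lt_of_le hvdist (min_le_left _ _)
      have hd2 : dist v w < 1 := lt_of_lt_of_le hvdist (min_le_right _ _)
      have himv : |v.im| < 1 := by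
        have := im_dist_le v w
        rw [hzero, sub_zero] at this
        linarith
      by_cases hcase : v.im ≤ 0
      · have hvS : v ∈ {z : ℂ | -1 ≤ z.im ∧ z.im ≤ 0} :=
          ⟨by cases abs_lt.1 himv; linarith, hcase⟩
        have heq : dist (H v) (H w) = dist (F v) (F w) := by
          rw [hHw0]; simp only [hH, if_pos hcase]
        rw [heq]
        exact hδ hvS hd1
      · push_neg at hcase
        have hvS : (starRingEnd ℂ) v ∈ {z : ℂ | -1 ≤ z.im ∧ z.im ≤ 0} := by
          refine ⟨?_, ?_⟩ <;> simp only [Complex.conj_im]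
          · cases abs_lt.1 himv; linarith
          · linarith
        have hvdist' : dist ((starRingEnd ℂ) v) w < δ := by
          have hwc : (starRingEnd ℂ) w = w := Complex.conj_eq_iff_im.2 hzero
          calc dist ((starRingEnd ℂ) v) w = dist ((starRingEnd ℂ) v) ((starRingEnd ℂ) w) := by
                rw [hwc]
            _ = dist v w := Complex.dist_conj_conj v w
            _ < δ := hd1
        have heq : dist (H v) (H w) = dist (F ((starRingEnd ℂ) v)) (F w) := by
          rw [hHw0, hFw0]
          simp only [hH, if_neg (not_le.2 hcase)]
          rw [dist_zero_right, dist_zero_right, RCLike.norm_conj]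
        rw [heq]
        exact hδ hvS hvdist'
    · have hGc : ContinuousAt (fun v => (starRingEnd ℂ) (F ((starRingEnd ℂ) v))) w := by
        have hcjS : {z : ℂ | -1 ≤ z.im ∧ z.im ≤ 0} ∈ nhds ((starRingEnd ℂ) w) := by
          have hmem : (starRingEnd ℂ) w ∈ {z : ℂ | -1 < z.im ∧ z.im < 0} := by
            constructor <;> simp only [Complex.conj_im] <;> linarith [hwU.1.2]
          exact Filter.mem_of_superset (hSlow_open.mem_nhds hmem)
            (fun v hv => ⟨hv.1.le, hv.2.le⟩)
        exact Complex.continuous_conj.continuousAt.comp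
          ((hc.continuousAt hcjS).comp Complex.continuous_conj.continuousAt)
      exact hGc.congr (hHG w hpos).symm
  have hHd : ∀ w ∈ U, DifferentiableAt ℂ H w := by
    intro w hwU
    by_cases hwim : w.im = 0
    · have hwre : 0 < w.re := hwU.2.resolve_left (fun h => h hwim)
      have hr0 : 0 < min w.re 1 := lt_min hwre one_pos
      have hball : ball w (min w.re 1) ⊆ U := by
        intro v hvb
        rw [mem_ball] at hvb
        have h1 : |v.im - w.im| ≤ dist v w := im_dist_le v w
        have h2 : |v.re - w.re| ≤ dist v w := re_dist_le v w
        rw [hwim, sub_zero] at h1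
        have him1 : |v.im| < 1 := lt_of_le_of_lt h1 (lt_of_lt_of_le hvb (min_le_right _ _))
        have hre1 : |v.re - w.re| < w.re := lt_of_le_of_lt h2
          (lt_of_lt_of_le hvb (min_le_left _ _))
        obtain ⟨hi1, hi2⟩ := abs_lt.1 him1
        obtain ⟨hr1, hr2⟩ := abs_lt.1 hre1
        exact ⟨⟨hi1, hi2⟩, Or.inr (by linarith)⟩
      have hmor : DifferentiableOn ℂ H (ball w (min w.re 1)) := by
        apply morera_ball
        · exact fun v hvb => (hHc v (hball hvb)).continuousWithinAt
        · exact fun v hvb hvim => hHd' v (hball hvb) (by rwa [hwim] at hvim)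
      exact hmor.differentiableAt (isOpen_ball.mem_nhds (mem_ball_self hr0))
    · exact hHd' w hwU hwim
  -- connectedness of U
  have hU_conn : IsPreconnected U := by
    have hA : Convex ℝ {z : ℂ | -1 < z.im ∧ z.im < 1 ∧ 0 < z.re} := by
      have h : {z : ℂ | -1 < z.im ∧ z.im < 1 ∧ 0 < z.re}
          = {z : ℂ | -1 < z.im} ∩ ({z : ℂ | z.im < 1} ∩ {z : ℂ | 0 < z.re}) := by
        ext v; simp [Set.mem_setOf_eq, and_assoc]
      rw [h]
      exact (convex_halfSpace_im_gt (-1)).inter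
        ((convex_halfSpace_im_lt 1).inter (convex_halfSpace_re_gt 0))
    have hB : Convex ℝ {z : ℂ | -1 < z.im ∧ z.im < 0} := by
      have h : {z : ℂ | -1 < z.im ∧ z.im < 0}
          = {z : ℂ | -1 < z.im} ∩ {z : ℂ | z.im < 0} := by
        ext v; simp [Set.mem_setOf_eq]
      rw [h]
      exact (convex_halfSpace_im_gt (-1)).inter (convex_halfSpace_im_lt 0)
    have hC : Convex ℝ {z : ℂ | 0 < z.im ∧ z.im < 1} := by
      have h : {z : ℂ | 0 < z.im ∧ z.im < 1}
          = {z : ℂ | 0 < z.im} ∩ {z : ℂ | z.im < 1} := by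
        ext v; simp [Set.mem_setOf_eq]
      rw [h]
      exact (convex_halfSpace_im_gt 0).inter (convex_halfSpace_im_lt 1)
    have hUeq : U = ({z : ℂ | -1 < z.im ∧ z.im < 0}
        ∪ {z : ℂ | -1 < z.im ∧ z.im < 1 ∧ 0 < z.re}) ∪ {z : ℂ | 0 < z.im ∧ z.im < 1} := by
      ext v
      simp only [hUdef, Set.mem_setOf_eq, Set.mem_union]
      constructor
      · rintro ⟨⟨h1, h2⟩, h3⟩
        rcases lt_trichotomy v.im 0 with h | h | h
        · exact Or.inl (Or.inl ⟨h1, h⟩)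
        · exact Or.inl (Or.inr ⟨h1, h2, h3.resolve_left (fun hh => hh h)⟩)
        · exact Or.inr ⟨h, h2⟩
      · rintro ((⟨h1, h2⟩ | ⟨h1, h2, h3⟩) | ⟨h1, h2⟩)
        · exact ⟨⟨h1, by linarith⟩, Or.inl (ne_of_lt h2)⟩
        · exact ⟨⟨h1, h2⟩, Or.inr h3⟩
        · exact ⟨⟨by linarith, h2⟩, Or.inl (ne_of_gt h1)⟩
    rw [hUeq]
    have hp1 : ((1 : ℂ) + (-(1:ℝ)/2) * I) ∈ {z : ℂ | -1 < z.im ∧ z.im < 0} := by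
      constructor <;> simp <;> norm_num
    have hp1' : ((1 : ℂ) + (-(1:ℝ)/2) * I) ∈ {z : ℂ | -1 < z.im ∧ z.im < 1 ∧ 0 < z.re} := by
      refine ⟨?_, ?_, ?_⟩ <;> simp <;> norm_num
    have hp2 : ((1 : ℂ) + ((1:ℝ)/2) * I) ∈ {z : ℂ | -1 < z.im ∧ z.im < 1 ∧ 0 < z.re} := by
      refine ⟨?_, ?_, ?_⟩ <;> simp <;> norm_num
    have hp2' : ((1 : ℂ) + ((1:ℝ)/2) * I) ∈ {z : ℂ | 0 < z.im ∧ z.im < 1} := by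
      constructor <;> simp <;> norm_num
    apply IsPreconnected.union ((1 : ℂ) + ((1:ℝ)/2) * I)
    · exact Set.mem_union_right _ hp2
    · exact hp2'
    · exact IsPreconnected.union ((1 : ℂ) + (-(1:ℝ)/2) * I) hp1 hp1'
        hB.isPreconnected hA.isPreconnected
    · exact hC.isPreconnected
  -- analytic and identity theorem
  have hHdiffOn : DifferentiableOn ℂ H U := fun w hw => (hHd w hw).differentiableWithinAt
  have hHan : AnalyticOnNhd ℂ H U := hHdiffOn.analyticOnNhd hU_open
  have h1U : (1 : ℂ) ∈ U := by
    refine ⟨⟨?_, ?_⟩, Or.inr ?_⟩ <;> simp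
  have hfreq : ∃ᶠ w in nhdsWithin 1 {w : ℂ | w ≠ 1}, H w = 0 := by
    have hy : Filter.Tendsto (fun n : ℕ => (1 + 1/(n+1) : ℝ)) Filter.atTop (nhds 1) := by
      have h0 := tendsto_one_div_add_atTop_nhds_zero_nat (𝕜 := ℝ)
      have hcst : Filter.Tendsto (fun _ : ℕ => (1:ℝ)) Filter.atTop (nhds 1) := tendsto_const_nhds
      have h1 := hcst.add h0
      simpa using h1
    have hseq : Filter.Tendsto (fun n : ℕ => ((1 + 1/(n+1) : ℝ) : ℂ)) Filter.atTop
        (nhdsWithin 1 {w : ℂ | w ≠ 1}) := by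
      rw [tendsto_nhdsWithin_iff]
      constructor
      · have := (Complex.continuous_ofReal.tendsto (1:ℝ)).comp hy
        simpa [Function.comp_def] using this
      · apply Filter.Eventually.of_forall
        intro n
        simp only [Set.mem_setOf_eq]
        intro hcontra
        have h1 : (1 + 1/((n:ℝ)+1)) = 1 := by exact_mod_cast hcontra
        have : 1/((n:ℝ)+1) > 0 := by positivity
        linarith
    apply hseq.frequently
    apply Filter.Eventually.frequently
    apply Filter.Eventually.of_forall
    intro n
    have hpos : (0:ℝ) < 1 + 1/(n+1) := by positivity
    have him : ((1 + 1/(n+1) : ℝ) : ℂ).im = 0 := Complex.ofReal_im _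
    simp only [hH, if_pos him.le]
    exact hv _ hpos
  have hHzero : Set.EqOn H 0 U :=
    hHan.eqOn_zero_of_preconnected_of_frequently_eq_zero hU_conn h1U hfreq
  have hFSlow : ∀ w : ℂ, -1 < w.im → w.im < 0 → F w = 0 := by
    intro w h1 h2
    have hwU : w ∈ U := ⟨⟨h1, by linarith⟩, Or.inl (ne_of_lt h2)⟩
    have h0 := hHzero hwU
    simp only [hH, if_pos h2.le, Pi.zero_apply] at h0
    exact h0
  -- pass to the closure
  intro z hz
  obtain ⟨hz1, hz2⟩ := hz
  set y : ℕ → ℝ := fun n => z.im + (-1/2 - z.im) * (1/(n+1)) with hy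
  have hy_bounds : ∀ n : ℕ, -1 < y n ∧ y n < 0 := by
    intro n
    have hs0 : 0 < 1/((n:ℝ)+1) := by positivity
    have hs1 : 1/((n:ℝ)+1) ≤ 1 := by
      rw [div_le_one (by positivity)]
      have : (0:ℝ) ≤ (n:ℝ) := Nat.cast_nonneg n
      linarith
    constructor <;> simp only [hy] <;> nlinarith
  set w : ℕ → ℂ := fun n => (z.re : ℂ) + (y n : ℝ) * I with hwdef
  have hwim : ∀ n, (w n).im = y n := by intro n; simp [hwdef]
  have hw_tend : Filter.Tendsto w Filter.atTop (nhds z) := by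
    have hyt : Filter.Tendsto y Filter.atTop (nhds z.im) := by
      have h0 := tendsto_one_div_add_atTop_nhds_zero_nat (𝕜 := ℝ)
      have h1 : Filter.Tendsto (fun n : ℕ => (-1/2 - z.im) * (1/((n:ℝ)+1))) Filter.atTop
          (nhds 0) := by
        have := h0.const_mul (-1/2 - z.im)
        simpa using this
      have hcst : Filter.Tendsto (fun _ : ℕ => z.im) Filter.atTop (nhds z.im) :=
        tendsto_const_nhds
      have h2 := hcst.add h1
      simpa [hy] using h2
    have hcont : Continuous fun t : ℝ => (z.re : ℂ) + (t : ℂ) * I := by fun_prop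
    have h2 := (hcont.tendsto z.im).comp hyt
    have h3 : (z.re : ℂ) + (z.im : ℂ) * I = z := Complex.re_add_im z
    rw [h3] at h2
    exact h2
  have hw_memS : ∀ n, w n ∈ {v : ℂ | -1 ≤ v.im ∧ v.im ≤ 0} := by
    intro n
    rw [Set.mem_setOf_eq, hwim n]
    exact ⟨(hy_bounds n).1.le, (hy_bounds n).2.le⟩
  have h1 : Filter.Tendsto (F ∘ w) Filter.atTop (nhds (F z)) := by
    apply (hc z ⟨hz1, hz2⟩).tendsto.comp
    rw [tendsto_nhdsWithin_iff]
    exact ⟨hw_tend, Filter.Eventually.of_forall hw_memS⟩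
  have h2 : (F ∘ w) = fun _ => (0:ℂ) := by
    funext n
    exact hFSlow (w n) (by rw [hwim]; exact (hy_bounds n).1) (by rw [hwim]; exact (hy_bounds n).2)
  rw [h2] at h1
  exact (tendsto_nhds_unique h1 tendsto_const_nhds)
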